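/- arXiv:1410.3674 — 9 statements merged into one kernel-verified Lean document; each statement's English description precedes it below -/
import Mathlib

section
/- With F_i (1 ≤ i ≤ N), F̂, and F_∞ = 1_{(N+1)m} − F̂ as in the definition of q-convolution, the subspace L = ker(F̂ − (1 − q^λ)·1_{(N+1)m}) ⊆ ℂ^{(N+1)m} is invariant under each F_j (1 ≤ j ≤ N) and under F_∞. -/
/-!
Every block row of `F̂ v` is the same vector `S = ∑ j, B j *ᵥ v j`, so `v ∈ L` means
`S = (1 - c) • v r` for every block index `r`. The only nonzero block row of `F_k v` is
`S - (1 - c) • v (k + 1)`, hence `F_k v = 0`; and `F_∞ v = v - (1 - c) • v = c • v`.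
Both lie in `L`, which is the eigenspace of a linear map.
-/

theorem Matrix.sum_mulVec_smul {ι m n R : Type*} [Fintype ι] [Fintype n] [CommSemiring R]
    (B : ι → Matrix m n R) (c : R) (v : ι → n → R) :
    ∑ j, (B j).mulVec ((c • v) j) = c • ∑ j, (B j).mulVec (v j) := by
  simp only [Pi.smul_apply, Matrix.mulVec_smul, Finset.smul_sum]

/-- The subspace `L = ker(F̂ − (1 − q^λ)·1)` is invariant under each `F_j`
(1 ≤ j ≤ N) and under `F_∞ = 1 − F̂`, where `c` denotes `q^λ`. -/
theorem qmc_L_invariant (m N : ℕ) (c : ℂ)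
    (B : Fin (N + 1) → Matrix (Fin m) (Fin m) ℂ)
    (F : Fin N → (Fin (N + 1) → Fin m → ℂ) → (Fin (N + 1) → Fin m → ℂ))
    (hF : ∀ k v, F k v = fun r =>
      if r = k.succ then (∑ j, (B j).mulVec (v j)) - (1 - c) • v k.succ else 0)
    (Fhat : (Fin (N + 1) → Fin m → ℂ) → (Fin (N + 1) → Fin m → ℂ))
    (hFhat : ∀ v, Fhat v = fun _ => ∑ j, (B j).mulVec (v j))
    (Finf : (Fin (N + 1) → Fin m → ℂ) → (Fin (N + 1) → Fin m → ℂ))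
    (hFinf : ∀ v, Finf v = v - Fhat v)
    (L : Set (Fin (N + 1) → Fin m → ℂ))
    (hL : L = {v | Fhat v = (1 - c) • v}) :
    (∀ k, ∀ v ∈ L, F k v ∈ L) ∧ (∀ v ∈ L, Finf v ∈ L) := by
  subst hL
  have row_eq : ∀ v, Fhat v = (1 - c) • v → ∀ r, ∑ j, (B j).mulVec (v j) = (1 - c) • v r :=
    fun v hv r => by simpa only [hFhat, Pi.smul_apply] using congrFun hv r
  have zero_mem : Fhat 0 = (1 - c) • 0 := by
    simp only [hFhat, Pi.zero_apply, Matrix.mulVec_zero, Finset.sum_const_zero, smul_zero]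
    rfl
  have smul_mem : ∀ v, Fhat v = (1 - c) • v → Fhat (c • v) = (1 - c) • c • v := by
    intro v hv
    rw [hFhat, Matrix.sum_mulVec_smul]
    funext r
    rw [row_eq v hv r, smul_comm]
    rfl
  refine ⟨fun k v hv => ?_, fun v hv => ?_⟩
  · have hFk : F k v = 0 := by
      rw [hF]
      funext r
      split_ifs with hr
      · rw [row_eq v hv, sub_self]
        rfl
      · rfl
    rw [hFk]
    exact zero_mem
  · have hFinf_v : Finf v = c • v := by
      rw [hFinf, hv, sub_smul, one_smul, sub_sub_cancel]
    rw [hFinf_v]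
    exact smul_mem v hv
end

section
/- If q^λ ≠ 1, then K ∩ L = 0 and L = { (h, h, …, h) : h ∈ ker(Σ_{j=0}^N B_j − (1 − q^λ)·1_m) }, where K = ⊕_{i=0}^N ker B_i and L = ker(F̂ − (1 − q^λ)·1_{(N+1)m}). -/
/-!
Every block row of `F̂` is the same, so `F̂ v` is a constant tuple; if `F̂ v = a • v` with
`a = 1 - q^λ ≠ 0`, then `v` itself is constant, `v = (h, …, h)`, and the eigen-equation collapses
to `(∑ j, B j) h = a • h`. On `K` the sum `∑ j, B j v_j` vanishes, so there `a • v = 0` forces `v = 0`.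
-/

open Matrix

section RepeatedBlockRow

variable {ι n 𝕜 : Type*} [Fintype ι] [Fintype n] [Field 𝕜] (B : ι → Matrix n n 𝕜) {a : 𝕜}

theorem repeatedBlockRow_eigen_iff (ha : a ≠ 0) (v : ι → n → 𝕜) :
    (fun _ => ∑ j, B j *ᵥ v j) = a • v ↔
      ∃ h : n → 𝕜, (∑ j, B j) *ᵥ h = a • h ∧ v = fun _ => h := by
  constructor
  · intro hv
    set s := ∑ j, B j *ᵥ v j
    have hv_const : v = fun _ => a⁻¹ • s := by
      funext i
      rw [congrFun hv i, Pi.smul_apply, inv_smul_smul₀ ha]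
    refine ⟨a⁻¹ • s, ?_, hv_const⟩
    calc (∑ j, B j) *ᵥ (a⁻¹ • s) = ∑ j, B j *ᵥ v j := by
          rw [sum_mulVec, hv_const]
      _ = a • a⁻¹ • s := (smul_inv_smul₀ ha s).symm
  · rintro ⟨h, hh, rfl⟩
    funext i
    rw [← sum_mulVec, hh, Pi.smul_apply]

theorem eq_zero_of_repeatedBlockRow_eigen_of_mulVec_eq_zero (ha : a ≠ 0) {v : ι → n → 𝕜}
    (hv : (fun _ => ∑ j, B j *ᵥ v j) = a • v) (hker : ∀ i, B i *ᵥ v i = 0) : v = 0 := by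
  simp only [hker, Finset.sum_const_zero] at hv
  exact (smul_eq_zero.mp hv.symm).resolve_left ha

end RepeatedBlockRow

/-- If `q^λ ≠ 1` (written `c ≠ 1`), then `K ∩ L = 0` and
`L = {(h,…,h) : h ∈ ker(Σ_j B_j − (1 − q^λ)·1_m)}`. -/
theorem qmc_KL_lambda_nonzero (m N : ℕ) (c : ℂ) (hc : c ≠ 1)
    (B : Fin (N + 1) → Matrix (Fin m) (Fin m) ℂ)
    (K : Set (Fin (N + 1) → Fin m → ℂ))
    (hK : K = {v | ∀ i, (B i).mulVec (v i) = 0})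
    (Fhat : (Fin (N + 1) → Fin m → ℂ) → (Fin (N + 1) → Fin m → ℂ))
    (hFhat : ∀ v, Fhat v = fun _ => ∑ j, (B j).mulVec (v j))
    (L : Set (Fin (N + 1) → Fin m → ℂ))
    (hL : L = {v | Fhat v = (1 - c) • v}) :
    K ∩ L = {0} ∧
    L = {v | ∃ h : Fin m → ℂ,
      (∑ j, B j).mulVec h = (1 - c) • h ∧ v = fun _ => h} := by
  have ha : (1 : ℂ) - c ≠ 0 := sub_ne_zero.mpr hc.symm
  subst hK hL
  simp only [hFhat]
  refine ⟨?_, Set.ext fun v => repeatedBlockRow_eigen_iff B ha v⟩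
  refine Set.eq_singleton_iff_unique_mem.mpr ⟨⟨fun i => mulVec_zero _, ?_⟩, ?_⟩
  · ext; simp
  · rintro v ⟨hker, hv⟩
    exact eq_zero_of_repeatedBlockRow_eigen_of_mulVec_eq_zero B ha hv hker
end

section
/- If q^λ ≠ 1, then dim(ℂ^{(N+1)m}/(K + L)) = (N+1)m − Σ_{i=0}^N dim ker B_i − dim ker(Σ_{j=0}^N B_j − (1 − q^λ)·1_m). -/
/-!
Since `a = 1 - q^λ ≠ 0`, a vector `v ∈ L` satisfies `a • v i = ∑ j, B j (v j)` for every `i`, so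
all its blocks are one vector `w` with `(∑ j, B j - a) w = 0`: `L` is the diagonal copy of
`ker (∑ j, B j - a)`. On `K` the row sums vanish, so `K ∩ L = 0`, and the formula is
`dim (V ⧸ K ⊔ L) = dim V - dim K - dim L`.
-/

open Module Submodule

theorem Submodule.finrank_pi_univ {k ι : Type*} [Field k] [Fintype ι] {V : ι → Type*}
    [∀ i, AddCommGroup (V i)] [∀ i, Module k (V i)] [∀ i, FiniteDimensional k (V i)]
    (p : ∀ i, Submodule k (V i)) :
    finrank k (pi Set.univ p) = ∑ i, finrank k (p i) := by
  let e : (∀ i, p i) ≃ₗ[k] pi Set.univ p :=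
    { toFun := fun f => ⟨fun i => f i, fun i _ => (f i).2⟩
      map_add' := fun _ _ => rfl
      map_smul' := fun _ _ => rfl
      invFun := fun v i => ⟨v.1 i, v.2 i (Set.mem_univ i)⟩
      left_inv := fun _ => rfl
      right_inv := fun _ => rfl }
  rw [← e.finrank_eq, finrank_pi_fintype]

section BlockRowSum

variable {k V ι : Type*} [Field k] [AddCommGroup V] [Module k V] [Fintype ι]

/-- The block operator on `ι → V` all of whose block rows are `(B j)_j`. -/
def blockRowSum (B : ι → Module.End k V) : Module.End k (ι → V) :=
  LinearMap.pi fun _ => ∑ j, B j ∘ₗ LinearMap.proj j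

theorem blockRowSum_apply (B : ι → Module.End k V) (v : ι → V) :
    blockRowSum B v = fun _ => ∑ j, B j (v j) := by
  ext; simp [blockRowSum]

theorem mem_ker_blockRowSum_sub_smul_iff (B : ι → Module.End k V) (a : k) (v : ι → V) :
    v ∈ LinearMap.ker (blockRowSum B - a • LinearMap.id) ↔ ∀ i, ∑ j, B j (v j) = a • v i := by
  simp [funext_iff, blockRowSum_apply, sub_eq_zero]

theorem disjoint_pi_ker_ker_blockRowSum_sub_smul (B : ι → Module.End k V) {a : k} (ha : a ≠ 0) :
    Disjoint (pi Set.univ fun i => LinearMap.ker (B i))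
      (LinearMap.ker (blockRowSum B - a • LinearMap.id)) := by
  refine disjoint_def.mpr fun v hK hL => funext fun i => ?_
  have hB : ∀ j, B j (v j) = 0 := fun j => hK j (Set.mem_univ j)
  have := (mem_ker_blockRowSum_sub_smul_iff B a v).1 hL i
  simp only [hB, Finset.sum_const_zero] at this
  exact (smul_eq_zero.mp this.symm).resolve_left ha

theorem ker_blockRowSum_sub_smul_eq_map [Nonempty ι] (B : ι → Module.End k V) {a : k}
    (ha : a ≠ 0) :
    LinearMap.ker (blockRowSum B - a • LinearMap.id)
      = (LinearMap.ker (∑ j, B j - a • LinearMap.id)).map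
          (LinearMap.pi fun _ : ι => LinearMap.id) := by
  ext v
  rw [mem_ker_blockRowSum_sub_smul_iff]
  simp only [Submodule.mem_map, LinearMap.mem_ker, LinearMap.sub_apply, LinearMap.sum_apply,
    LinearMap.smul_apply, LinearMap.id_apply, sub_eq_zero]
  constructor
  · intro hv
    -- every block of `v` equals `a⁻¹ • ∑ j, B j (v j)`, so `v` is constant
    have hconst : ∀ i j, v i = v j := fun i j =>
      smul_right_injective V ha ((hv i).symm.trans (hv j))
    obtain ⟨i₀⟩ := ‹Nonempty ι›
    refine ⟨v i₀, ?_, funext fun i => (hconst i i₀).symm⟩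
    simpa only [hconst _ i₀] using hv i₀
  · rintro ⟨w, hw, rfl⟩ _
    simpa using hw

theorem finrank_ker_blockRowSum_sub_smul [Nonempty ι] (B : ι → Module.End k V) {a : k}
    (ha : a ≠ 0) :
    finrank k (LinearMap.ker (blockRowSum B - a • LinearMap.id))
      = finrank k (LinearMap.ker (∑ j, B j - a • LinearMap.id)) := by
  have hdiag : Function.Injective (LinearMap.pi fun _ : ι => (LinearMap.id : Module.End k V)) :=
    fun _ _ h => congrFun h (Classical.arbitrary ι)
  rw [ker_blockRowSum_sub_smul_eq_map B ha]
  exact (Submodule.equivMapOfInjective _ hdiag _).finrank_eq.symm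

end BlockRowSum

theorem Submodule.finrank_quotient_sup_add_of_disjoint {k V : Type*} [Field k] [AddCommGroup V]
    [Module k V] [FiniteDimensional k V] {p q : Submodule k V} (h : Disjoint p q) :
    finrank k (V ⧸ p ⊔ q) + finrank k p + finrank k q = finrank k V := by
  rw [add_assoc, ← Submodule.finrank_sup_add_finrank_inf_eq, h.eq_bot, finrank_bot, add_zero,
    Submodule.finrank_quotient_add_finrank]

/-- Dimension formula: if `q^λ ≠ 1` (written `c ≠ 1`), then
`dim(ℂ^{(N+1)m}/(K + L)) = (N+1)m − Σ_i dim ker B_i − dim ker(Σ_j B_j − (1−q^λ)·1_m)`,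
stated in the additive form. -/
theorem qmc_dimension_formula (m N : ℕ) (c : ℂ) (hc : c ≠ 1)
    (B : Fin (N + 1) → Matrix (Fin m) (Fin m) ℂ)
    (K : Submodule ℂ (Fin (N + 1) → Fin m → ℂ))
    (hK : K = Submodule.pi Set.univ fun i => LinearMap.ker (B i).mulVecLin)
    (Fhat : (Fin (N + 1) → Fin m → ℂ) →ₗ[ℂ] (Fin (N + 1) → Fin m → ℂ))
    (hFhat : ∀ v, Fhat v = fun _ => ∑ j, (B j).mulVec (v j))
    (L : Submodule ℂ (Fin (N + 1) → Fin m → ℂ))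
    (hL : L = LinearMap.ker (Fhat - (1 - c) • LinearMap.id)) :
    Module.finrank ℂ ((Fin (N + 1) → Fin m → ℂ) ⧸ (K ⊔ L))
      + (∑ i, Module.finrank ℂ (LinearMap.ker (B i).mulVecLin))
      + Module.finrank ℂ
          (LinearMap.ker ((∑ j, B j) - (1 - c) • (1 : Matrix (Fin m) (Fin m) ℂ)).mulVecLin)
      = (N + 1) * m := by
  have ha : (1 : ℂ) - c ≠ 0 := sub_ne_zero.mpr hc.symm
  have hF : Fhat = blockRowSum fun i => (B i).mulVecLin :=
    LinearMap.ext fun v => by rw [hFhat, blockRowSum_apply]; rfl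
  have hM : ((∑ j, B j) - (1 - c) • (1 : Matrix (Fin m) (Fin m) ℂ)).mulVecLin
      = ∑ j, (B j).mulVecLin - (1 - c) • LinearMap.id := by
    simp only [map_sub, map_sum, map_smul, Matrix.mulVecLin_one]
  have hKL : Disjoint K L := hK ▸ hL ▸ hF ▸ disjoint_pi_ker_ker_blockRowSum_sub_smul _ ha
  rw [← finrank_pi_univ, ← hK, hM, ← finrank_ker_blockRowSum_sub_smul _ ha, ← hF, ← hL,
    Submodule.finrank_quotient_sup_add_of_disjoint hKL]
  simp [Module.finrank_pi_fintype]
end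

section
/- Let W ⊆ V = ℂ^m be invariant under B_0, …, B_N, and suppose q^λ ≠ 1. Then W^{N+1} ∩ (K_V + L_V) = K_W + L_W, where K_V = ⊕_i ker B_i, L_V = {(h,…,h) : h ∈ ker(ΣB_j − (1−q^λ)1_m)}, and K_W, L_W are the analogous spaces with ker replaced by kernel intersected with W (i.e. K_W = ⊕_i (ker B_i ∩ W), L_W = {(h,…,h) : h ∈ W, (ΣB_j)h = (1−q^λ)h}). -/
/-!
Write `v ∈ W^{N+1}` as `v = k + (h, …, h)` with `B_i k_i = 0` and `(∑ B_j) h = (1 - q^λ) h`.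
Since `B_j k_j = 0`, we get `(1 - q^λ) h = ∑ B_j h = ∑ B_j v_j ∈ W`, so `h ∈ W` because
`1 - q^λ` is invertible, and then also `k_i = v_i - h ∈ W`.
-/

open Module End Set

namespace Submodule

variable {R M : Type*} [Ring R] [AddCommGroup M] [Module R M]

theorem inf_sup_eq_inf_sup_inf_of_add_mem {P Q S : Submodule R M}
    (h : ∀ q ∈ Q, ∀ s ∈ S, q + s ∈ P → s ∈ P) : P ⊓ (Q ⊔ S) = P ⊓ Q ⊔ P ⊓ S := by
  refine le_antisymm ?_ (sup_le (inf_le_inf_left _ le_sup_left) (inf_le_inf_left _ le_sup_right))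
  rintro v ⟨hvP, hv⟩
  obtain ⟨q, hq, s, hs, rfl⟩ := mem_sup.mp hv
  have hsP : s ∈ P := h q hq s hs hvP
  have hqP : q ∈ P := by simpa using sub_mem hvP hsP
  exact add_mem_sup ⟨hqP, hq⟩ ⟨hsP, hs⟩

variable {ι : Type*}

theorem pi_univ_inf (p q : ι → Submodule R M) :
    pi univ (fun i => p i ⊓ q i) = pi univ p ⊓ pi univ q := by
  ext v
  simp [mem_pi, forall_and]

theorem map_pi_id_inf [Nonempty ι] (E W : Submodule R M) :
    (E ⊓ W).map (LinearMap.pi fun _ : ι => LinearMap.id) =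
      pi univ (fun _ => W) ⊓ E.map (LinearMap.pi fun _ : ι => LinearMap.id) := by
  ext v
  constructor
  · rintro ⟨h, ⟨hE, hW⟩, rfl⟩
    exact ⟨mem_pi.mpr fun _ _ => hW, h, hE, rfl⟩
  · rintro ⟨hvW, h, hE, rfl⟩
    exact ⟨h, ⟨hE, (mem_pi.mp hvW) (Classical.arbitrary ι) (mem_univ _)⟩, rfl⟩

end Submodule

section Eigenspace

variable {R V ι : Type*} [CommRing R] [AddCommGroup V] [Module R V] [Fintype ι]
  {f : ι → End R V} {W : Submodule R V}

theorem Submodule.mem_of_mem_eigenspace_sum {a : R} (ha : IsUnit a)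
    (hW : ∀ i, MapsTo (f i) W W) {h : V} (hh : h ∈ eigenspace (∑ i, f i) a) {k : ι → V}
    (hk : ∀ i, f i (k i) = 0) (hkh : ∀ i, k i + h ∈ W) : h ∈ W := by
  rw [← W.smul_mem_iff_of_isUnit ha, ← mem_eigenspace_iff.mp hh]
  have hsum : (∑ i, f i) h = ∑ i, f i (k i + h) := by simp [hk]
  rw [hsum]
  exact W.sum_mem fun i _ => hW i (hkh i)

theorem Submodule.pi_inf_ker_sup_map_eigenspace [Nonempty ι] {a : R} (ha : IsUnit a)
    (hW : ∀ i, MapsTo (f i) W W) :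
    Submodule.pi univ (fun _ : ι => W) ⊓
        (Submodule.pi univ (fun i => LinearMap.ker (f i)) ⊔
          (eigenspace (∑ i, f i) a).map (LinearMap.pi fun _ => LinearMap.id)) =
      Submodule.pi univ (fun i => LinearMap.ker (f i) ⊓ W) ⊔
        (eigenspace (∑ i, f i) a ⊓ W).map (LinearMap.pi fun _ => LinearMap.id) := by
  rw [Submodule.inf_sup_eq_inf_sup_inf_of_add_mem, Submodule.map_pi_id_inf,
    Submodule.pi_univ_inf, inf_comm (Submodule.pi univ _)]
  rintro k hk _ ⟨h, hh, rfl⟩ hkh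
  have hhW : h ∈ W := Submodule.mem_of_mem_eigenspace_sum ha hW hh
    (fun i => (Submodule.mem_pi.mp hk) i (mem_univ i))
    (fun i => (Submodule.mem_pi.mp hkh) i (mem_univ i))
  exact Submodule.mem_pi.mpr fun _ _ => hhW

end Eigenspace

namespace Matrix

variable {n R : Type*} [Fintype n] [CommRing R]

theorem mulVecLin_sum {ι : Type*} (s : Finset ι) (A : ι → Matrix n n R) :
    (∑ i ∈ s, A i).mulVecLin = ∑ i ∈ s, (A i).mulVecLin :=
  map_sum (mulVecBilin R R) A s

theorem ker_mulVecLin_sub_smul_one [DecidableEq n] (A : Matrix n n R) (μ : R) :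
    LinearMap.ker (A - μ • 1).mulVecLin = eigenspace A.mulVecLin μ := by
  ext v
  simp [sub_eq_zero]

end Matrix

/-- For a `B_i`-invariant subspace `W` and `q^λ ≠ 1` (written `c ≠ 1`),
`W^{N+1} ∩ (K_V + L_V) = K_W + L_W`. -/
theorem qmc_WKL (m N : ℕ) (c : ℂ) (hc : c ≠ 1)
    (B : Fin (N + 1) → Matrix (Fin m) (Fin m) ℂ)
    (W : Submodule ℂ (Fin m → ℂ))
    (hW : ∀ i, ∀ w ∈ W, (B i).mulVec w ∈ W)
    (const : (Fin m → ℂ) →ₗ[ℂ] (Fin (N + 1) → Fin m → ℂ))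
    (hconst : const = LinearMap.pi fun _ => LinearMap.id) :
    (Submodule.pi Set.univ fun _ : Fin (N + 1) => W) ⊓
      ((Submodule.pi Set.univ fun i => LinearMap.ker (B i).mulVecLin) ⊔
        Submodule.map const
          (LinearMap.ker ((∑ j, B j) - (1 - c) • (1 : Matrix (Fin m) (Fin m) ℂ)).mulVecLin))
    = (Submodule.pi Set.univ fun i => LinearMap.ker (B i).mulVecLin ⊓ W) ⊔
        Submodule.map const
          (LinearMap.ker ((∑ j, B j) - (1 - c) • (1 : Matrix (Fin m) (Fin m) ℂ)).mulVecLin ⊓ W) := by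
  subst hconst
  rw [Matrix.ker_mulVecLin_sub_smul_one, Matrix.mulVecLin_sum]
  exact Submodule.pi_inf_ker_sup_map_eigenspace (sub_ne_zero.mpr hc.symm).isUnit hW
end

section
/- Suppose λ = 0 and the surjectivity condition (∗∗) holds: for every i ∈ {0,…,N} and every τ ∈ ℂ, Σ_{j≠i} im B_j + im(B_i + τ·1_m) = ℂ^m. Define φ: (ℂ^m)^{N+1} → ℂ^m by φ(v_0,…,v_N) = Σ_{j=0}^N B_j v_j. Then φ is surjective, ker φ = K + L, and φ intertwines the actions: φ ∘ F_j = B_j ∘ φ for 1 ≤ j ≤ N and φ ∘ F_∞ = B_∞ ∘ φ, where B_∞ = 1_m − Σ_{i=1}^N B_i − B_0. Hence the quotient module (ℂ^m)^{N+1}/(K+L) with the induced actions of F_1,…,F_N,F_∞ is isomorphic to ℂ^m with the actions of B_1,…,B_N,B_∞. -/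
/-!
`φ` is the block row `v ↦ Σ B_j v_j`, so its range is the sum of the ranges of the `B_j`, which
is everything by `(∗∗)` at `i = 0`, `τ = 0`. Since `F̂` repeats `φ` in every block row,
`L = ker F̂ = ker φ ⊇ K`, so `ker φ = K + L` and the quotient is `ℂ^m` by the first isomorphism
theorem. `F_j v` is `φ v` placed in block `j + 1`, and `F_∞ = 1 − F̂` with `Σ_j B_j = 1 − B_∞`, which
gives the intertwining relations.
-/

namespace LinearMap

section lsum

variable {R ι M : Type*} {φ : ι → Type*} [CommSemiring R] [Fintype ι] [DecidableEq ι]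
  [AddCommMonoid M] [Module R M] [∀ i, AddCommMonoid (φ i)] [∀ i, Module R (φ i)]

theorem range_lsum (f : (i : ι) → φ i →ₗ[R] M) :
    range (lsum R φ R f) = ⨆ i, range (f i) := by
  refine le_antisymm ?_ (iSup_le fun i => ?_)
  · rintro _ ⟨v, rfl⟩
    rw [lsum_apply, sum_apply]
    exact Submodule.sum_mem _ fun i _ => Submodule.mem_iSup_of_mem i (mem_range_self _ _)
  · rintro _ ⟨x, rfl⟩
    exact ⟨Pi.single i x, lsum_piSingle R φ R f i x⟩

theorem pi_ker_le_ker_lsum (f : (i : ι) → φ i →ₗ[R] M) :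
    Submodule.pi Set.univ (fun i => ker (f i)) ≤ ker (lsum R φ R f) := fun v hv => by
  simp only [mem_ker, lsum_apply, sum_apply, comp_apply, proj_apply]
  exact Finset.sum_eq_zero fun i _ => hv i (Set.mem_univ i)

end lsum

theorem ker_pi_const {R ι M N : Type*} [Semiring R] [Nonempty ι]
    [AddCommMonoid M] [Module R M] [AddCommMonoid N] [Module R N] (f : M →ₗ[R] N) :
    ker (pi fun _ : ι => f) = ker f := by
  rw [ker_pi, iInf_const]

end LinearMap

open LinearMap in
/-- Case `λ = 0` with condition `(∗∗)`: the map `φ(v) = Σ_j B_j v_j` is surjective,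
`ker φ = K + L`, `φ` intertwines `F_j` with `B_j` and `F_∞` with `B_∞`, and hence
`ℂ^{(N+1)m}/(K+L) ≅ ℂ^m`. -/
theorem qmc_mc0_iso (m N : ℕ)
    (Bl : Fin N → Matrix (Fin m) (Fin m) ℂ) (Binf : Matrix (Fin m) (Fin m) ℂ)
    (B : Fin (N + 1) → Matrix (Fin m) (Fin m) ℂ)
    (hB : B = Fin.cons (1 - ∑ i, Bl i - Binf) Bl)
    (hstar2 : ∀ i : Fin (N + 1), ∀ τ : ℂ,
      (⨆ j, ⨆ _ : j ≠ i, LinearMap.range (B j).mulVecLin) ⊔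
        LinearMap.range (B i + τ • (1 : Matrix (Fin m) (Fin m) ℂ)).mulVecLin = ⊤)
    (φ : (Fin (N + 1) → Fin m → ℂ) →ₗ[ℂ] (Fin m → ℂ))
    (hφ : ∀ v, φ v = ∑ j, (B j).mulVec (v j))
    (F : Fin N → (Fin (N + 1) → Fin m → ℂ) → (Fin (N + 1) → Fin m → ℂ))
    (hF : ∀ k v, F k v = fun r =>
      if r = k.succ then (∑ j, (B j).mulVec (v j)) else 0)
    (Fhat : (Fin (N + 1) → Fin m → ℂ) →ₗ[ℂ] (Fin (N + 1) → Fin m → ℂ))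
    (hFhat : ∀ v, Fhat v = fun _ => ∑ j, (B j).mulVec (v j))
    (Finf : (Fin (N + 1) → Fin m → ℂ) → (Fin (N + 1) → Fin m → ℂ))
    (hFinf : ∀ v, Finf v = v - Fhat v)
    (K : Submodule ℂ (Fin (N + 1) → Fin m → ℂ))
    (hK : K = Submodule.pi Set.univ fun i => LinearMap.ker (B i).mulVecLin)
    (L : Submodule ℂ (Fin (N + 1) → Fin m → ℂ))
    (hL : L = LinearMap.ker Fhat) :
    Function.Surjective φ ∧
    LinearMap.ker φ = K ⊔ L ∧
    (∀ k v, φ (F k v) = (B k.succ).mulVec (φ v)) ∧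
    (∀ v, φ (Finf v) = Binf.mulVec (φ v)) ∧
    ∃ e : ((Fin (N + 1) → Fin m → ℂ) ⧸ (K ⊔ L)) ≃ₗ[ℂ] (Fin m → ℂ),
      ∀ v, e (Submodule.Quotient.mk v) = φ v := by
  have hφ_lsum : φ = lsum ℂ _ ℂ fun j => (B j).mulVecLin := LinearMap.ext fun v => by simp [hφ]
  have hFhat_pi : Fhat = pi fun _ => φ := LinearMap.ext fun v => by
    funext r; rw [hFhat, pi_apply, hφ]
  have hsurj : Function.Surjective φ := by
    rw [← range_eq_top, hφ_lsum, range_lsum, iSup_split_single _ 0, sup_comm]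
    simpa using hstar2 0 0
  have hker : ker φ = K ⊔ L := by
    rw [hK, hL, hFhat_pi, ker_pi_const]
    exact (sup_eq_right.2 (hφ_lsum ▸ pi_ker_le_ker_lsum _)).symm
  refine ⟨hsurj, hker, fun k v => ?_, fun v => ?_,
    (Submodule.quotEquivOfEq _ _ hker.symm).trans (quotKerEquivOfSurjective φ hsurj), fun v => rfl⟩
  · have hFk : F k v = Pi.single k.succ (φ v) := by
      funext r; rw [hF, hφ, Pi.single_apply]
    rw [hFk, hφ_lsum, lsum_piSingle]; rfl
  · have hBinf : 1 - ∑ j, B j = Binf := by rw [hB, Fin.sum_cons]; abel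
    have hφ_Fhat : φ (Fhat v) = (∑ j, B j).mulVec (φ v) := by
      rw [hFhat, ← hφ v, hφ (fun _ => φ v), Matrix.sum_mulVec]
    rw [hFinf, map_sub, hφ_Fhat, ← hBinf, Matrix.sub_mulVec, Matrix.one_mulVec]
end

section
/- Assume B_0 := 1_m − Σ_{i=1}^N B_i − B_∞ satisfies that 1_m − B_0 is invertible and B_∞ is invertible. Define F_i, F̂, F_∞ = 1_{(N+1)m} − F̂ as in the q-convolution. Then the block matrix G_∞ := b_∞ F_∞ with b_∞ = ∏(−b_i^{-1}) ≠ 0 is invertible; equivalently, F_∞ = 1_{(N+1)m} − F̂ is invertible. -/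
/-!
`F̂` factors as `U * W`, where `U` stacks `N + 1` copies of `1_m` and `W` is the block row
`(B_0, …, B_N)`. By the Weinstein–Aronszajn identity `det (1 - U W) = det (1 - W U)`, and
`W U = Σ_j B_j = 1_m - B_∞`, so `det F_∞ = det B_∞ ≠ 0`; scaling by `b_∞ ≠ 0` keeps it a unit.
-/

open Matrix

theorem Matrix.det_one_sub_eq_det_one_sub_sum_blocks {ι n R : Type*} [Fintype ι] [DecidableEq ι]
    [Fintype n] [DecidableEq n] [CommRing R] (C : ι → Matrix n n R)
    (M : Matrix (ι × n) (ι × n) R) (hM : ∀ p r, M p r = C r.1 p.2 r.2) :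
    (1 - M).det = (1 - ∑ j, C j).det := by
  set U : Matrix (ι × n) n R := of fun p y => (1 : Matrix n n R) p.2 y
  set W : Matrix n (ι × n) R := of fun x r => C r.1 x r.2
  have hUW : M = U * W := by
    ext p r
    simp [U, W, hM, mul_apply, one_apply]
  have hWU : W * U = ∑ j, C j := by
    ext x y
    simp [U, W, mul_apply, one_apply, Matrix.sum_apply, Fintype.sum_prod_type]
  rw [hUW, det_one_sub_mul_comm, hWU]

theorem qmc_Ginf_invertible_general (m N : ℕ)
    (b : Fin N → ℂ) (hb0 : ∀ i, b i ≠ 0)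
    (Bl : Fin N → Matrix (Fin m) (Fin m) ℂ) (Binf : Matrix (Fin m) (Fin m) ℂ)
    (B0 : Matrix (Fin m) (Fin m) ℂ) (hB0 : B0 = 1 - ∑ i, Bl i - Binf)
    (hBinfinv : IsUnit Binf)
    (Fhat : Matrix (Fin (N + 1) × Fin m) (Fin (N + 1) × Fin m) ℂ)
    (hFhat : ∀ p r, Fhat p r = (Fin.cons B0 Bl : Fin (N + 1) → Matrix (Fin m) (Fin m) ℂ) r.1 p.2 r.2) :
    IsUnit ((1 : Matrix (Fin (N + 1) × Fin m) (Fin (N + 1) × Fin m) ℂ) - Fhat) ∧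
    IsUnit ((∏ i, (-(b i)⁻¹)) •
      ((1 : Matrix (Fin (N + 1) × Fin m) (Fin (N + 1) × Fin m) ℂ) - Fhat)) := by
  have hdet : (1 - Fhat).det = Binf.det := by
    rw [det_one_sub_eq_det_one_sub_sum_blocks _ Fhat hFhat, Fin.sum_cons, hB0]
    congr 1
    abel
  have hF : IsUnit (1 - Fhat) := by
    rw [isUnit_iff_isUnit_det, hdet]
    exact (isUnit_iff_isUnit_det Binf).1 hBinfinv
  have hbinf : ∏ i, -(b i)⁻¹ ≠ 0 :=
    Finset.prod_ne_zero_iff.2 fun i _ => neg_ne_zero.2 (inv_ne_zero (hb0 i))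
  exact ⟨hF, (isUnit_smul_iff (Units.mk0 _ hbinf) _).2 hF⟩

/-- If `1_m − B_0` and `B_∞` are invertible, then `F_∞ = 1 − F̂` is invertible,
and so is `G_∞ = b_∞ F_∞` with `b_∞ = ∏ (−b_i⁻¹) ≠ 0`. -/
theorem qmc_Ginf_invertible (m N : ℕ)
    (b : Fin N → ℂ) (hb0 : ∀ i, b i ≠ 0) (hbinj : Function.Injective b)
    (Bl : Fin N → Matrix (Fin m) (Fin m) ℂ) (Binf : Matrix (Fin m) (Fin m) ℂ)
    (B0 : Matrix (Fin m) (Fin m) ℂ) (hB0 : B0 = 1 - ∑ i, Bl i - Binf)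
    (hB0inv : IsUnit ((1 : Matrix (Fin m) (Fin m) ℂ) - B0))
    (hBinfinv : IsUnit Binf)
    (Fhat : Matrix (Fin (N + 1) × Fin m) (Fin (N + 1) × Fin m) ℂ)
    (hFhat : ∀ p r, Fhat p r = (Fin.cons B0 Bl : Fin (N + 1) → Matrix (Fin m) (Fin m) ℂ) r.1 p.2 r.2) :
    IsUnit ((1 : Matrix (Fin (N + 1) × Fin m) (Fin (N + 1) × Fin m) ℂ) - Fhat) ∧
    IsUnit ((∏ i, (-(b i)⁻¹)) •
      ((1 : Matrix (Fin (N + 1) × Fin m) (Fin (N + 1) × Fin m) ℂ) - Fhat)) :=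
  qmc_Ginf_invertible_general m N b hb0 Bl Binf B0 hB0 hBinfinv Fhat hFhat
end

section
/- With the same setup (1_m − B_0 and B_∞ invertible), the matrix G_0 := Σ_{i=1}^N F_i + F_∞ = Σ_{i=1}^N F_i + 1_{(N+1)m} − F̂ is invertible, i.e., ker G_0 = 0. -/
/-!
Here `c` stands for `q^λ`. Listing the block rows and columns in the order `0 | 1, …, N`, the
matrix `G₀ = Σ Fᵢ + 1 − F̂` is block upper triangular: its first block row is
`(1 − B₀, −B₁, …, −B_N)`, and in every later block row the entries of `Fᵢ` cancel those of `F̂`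
except on the diagonal, where `q^λ · 1` is left. A block upper triangular matrix is invertible
as soon as its diagonal blocks `1 − B₀` and `q^λ · 1` are.
-/

open Matrix

def finSuccProdEquiv (n : ℕ) (α : Type*) : Fin (n + 1) × α ≃ α ⊕ Fin n × α :=
  ((finSuccEquiv n).prodCongr (Equiv.refl α)).trans optionProdEquiv

@[simp]
lemma finSuccProdEquiv_zero {n : ℕ} {α : Type*} (x : α) :
    finSuccProdEquiv n α (0, x) = .inl x := by
  simp [finSuccProdEquiv]

@[simp]
lemma finSuccProdEquiv_succ {n : ℕ} {α : Type*} (k : Fin n) (x : α) :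
    finSuccProdEquiv n α (k.succ, x) = .inr (k, x) := by
  simp [finSuccProdEquiv]

lemma isUnit_smul_one {R n : Type*} [CommRing R] [Fintype n] [DecidableEq n] {c : R}
    (hc : IsUnit c) : IsUnit (c • (1 : Matrix n n R)) := by
  simpa [Algebra.algebraMap_eq_smul_one] using hc.map (algebraMap R (Matrix n n R))

lemma sum_add_one_sub_eq_submatrix_fromBlocks {R α : Type*} [CommRing R] [Fintype α]
    [DecidableEq α] {N : ℕ} (c : R) (Bl : Fin N → Matrix α α R) (B0 : Matrix α α R)
    (Fhat : Matrix (Fin (N + 1) × α) (Fin (N + 1) × α) R)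
    (hFhat : ∀ p r, Fhat p r = (Fin.cons B0 Bl : Fin (N + 1) → Matrix α α R) r.1 p.2 r.2)
    (F : Fin N → Matrix (Fin (N + 1) × α) (Fin (N + 1) × α) R)
    (hF : ∀ k p r, F k p r = if p.1 = k.succ then
        ((Fin.cons B0 Bl : Fin (N + 1) → Matrix α α R) r.1 p.2 r.2 -
          if r.1 = k.succ ∧ p.2 = r.2 then 1 - c else 0)
      else 0) :
    (∑ k, F k) + 1 - Fhat =
      (fromBlocks (1 - B0) (of fun x q => -Bl q.1 x q.2) 0 (c • 1)).submatrix
        (finSuccProdEquiv N α) (finSuccProdEquiv N α) := by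
  ext ⟨i, x⟩ ⟨j, y⟩
  induction i using Fin.cases <;> induction j using Fin.cases
  case succ.succ k l =>
    simp only [Matrix.sub_apply, Matrix.add_apply, Matrix.sum_apply, hF, hFhat, Fin.succ_inj,
      Fin.cons_succ, Finset.sum_ite_eq, Finset.mem_univ, if_true, one_apply, Prod.mk.injEq,
      submatrix_apply, finSuccProdEquiv_succ, fromBlocks_apply₂₂, Matrix.smul_apply, smul_eq_mul,
      mul_ite, mul_one, mul_zero]
    split_ifs <;> grind
  all_goals simp [hF, hFhat, Matrix.sum_apply, one_apply, Fin.succ_ne_zero,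
    eq_comm (a := (0 : Fin _))]

theorem qmc_G0_invertible_general (m N : ℕ) (c : ℂ) (hc : c ≠ 0)
    (Bl : Fin N → Matrix (Fin m) (Fin m) ℂ)
    (B0 : Matrix (Fin m) (Fin m) ℂ)
    (hB0inv : IsUnit ((1 : Matrix (Fin m) (Fin m) ℂ) - B0))
    (Fhat : Matrix (Fin (N + 1) × Fin m) (Fin (N + 1) × Fin m) ℂ)
    (hFhat : ∀ p r, Fhat p r = (Fin.cons B0 Bl : Fin (N + 1) → Matrix (Fin m) (Fin m) ℂ) r.1 p.2 r.2)
    (F : Fin N → Matrix (Fin (N + 1) × Fin m) (Fin (N + 1) × Fin m) ℂ)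
    (hF : ∀ k p r, F k p r = if p.1 = k.succ then
        ((Fin.cons B0 Bl : Fin (N + 1) → Matrix (Fin m) (Fin m) ℂ) r.1 p.2 r.2 - if r.1 = k.succ ∧ p.2 = r.2 then 1 - c else 0)
      else 0) :
    IsUnit ((∑ k, F k) + 1 - Fhat) := by
  rw [sum_add_one_sub_eq_submatrix_fromBlocks c Bl B0 Fhat hFhat F hF, isUnit_submatrix_equiv,
    isUnit_fromBlocks_zero₂₁]
  exact ⟨hB0inv, isUnit_smul_one hc.isUnit⟩

/-- If `1_m − B_0` and `B_∞` are invertible (and `q^λ ≠ 0`, written `c ≠ 0`),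
then `G_0 = Σ_{i=1}^N F_i + 1 − F̂` is invertible. -/
theorem qmc_G0_invertible (m N : ℕ) (c : ℂ) (hc : c ≠ 0)
    (Bl : Fin N → Matrix (Fin m) (Fin m) ℂ) (Binf : Matrix (Fin m) (Fin m) ℂ)
    (B0 : Matrix (Fin m) (Fin m) ℂ) (hB0 : B0 = 1 - ∑ i, Bl i - Binf)
    (hB0inv : IsUnit ((1 : Matrix (Fin m) (Fin m) ℂ) - B0))
    (hBinfinv : IsUnit Binf)
    (Fhat : Matrix (Fin (N + 1) × Fin m) (Fin (N + 1) × Fin m) ℂ)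
    (hFhat : ∀ p r, Fhat p r = (Fin.cons B0 Bl : Fin (N + 1) → Matrix (Fin m) (Fin m) ℂ) r.1 p.2 r.2)
    (F : Fin N → Matrix (Fin (N + 1) × Fin m) (Fin (N + 1) × Fin m) ℂ)
    (hF : ∀ k p r, F k p r = if p.1 = k.succ then
        ((Fin.cons B0 Bl : Fin (N + 1) → Matrix (Fin m) (Fin m) ℂ) r.1 p.2 r.2 - if r.1 = k.succ ∧ p.2 = r.2 then 1 - c else 0)
      else 0) :
    IsUnit ((∑ k, F k) + 1 - Fhat) :=
  qmc_G0_invertible_general m N c hc Bl B0 hB0inv Fhat hFhat F hF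
end

section
/- Let A_∞ ∈ M_m(ℂ), b_∞ ≠ 0, and let G_∞ = b_∞(1_{(N+1)m} − F̂), where F̂ is a block matrix all of whose block rows are equal to some fixed row (B_0,…,B_N), and where A_∞ is related to G_∞ by (κ1_{(N+1)m} − G_∞)^n (h,…,h) = ((κ1_m − A_∞)^n h, …, (κ1_m − A_∞)^n h) for constant vectors (h,…,h). Then for κ ≠ b_∞ and all n > 0, dim ker((κ·1_{(N+1)m} − G_∞)^n) = dim ker((κ·1_m − A_∞)^n). -/
open Matrix

/-- For `G_∞ = b_∞(1 − F̂)` with `F̂` the block matrix all of whose block rows equal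
`(B_0,…,B_N)`, `A_∞ = b_∞(1_m − Σ_j B_j)` and `κ ≠ b_∞`, one has
`dim ker((κ·1 − G_∞)^n) = dim ker((κ·1_m − A_∞)^n)` for all `n > 0`. -/
theorem qmc_Ginf_spectral (m N : ℕ) (binf κ : ℂ) (hbinf : binf ≠ 0) (hκ : κ ≠ binf)
    (B : Fin (N + 1) → Matrix (Fin m) (Fin m) ℂ)
    (Ainf : Matrix (Fin m) (Fin m) ℂ) (hAinf : Ainf = binf • (1 - ∑ j, B j))
    (Fhat : Matrix (Fin (N + 1) × Fin m) (Fin (N + 1) × Fin m) ℂ)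
    (hFhat : ∀ p r, Fhat p r = B r.1 p.2 r.2)
    (Ginf : Matrix (Fin (N + 1) × Fin m) (Fin (N + 1) × Fin m) ℂ)
    (hGinf : Ginf = binf • (1 - Fhat)) :
    ∀ n : ℕ, 0 < n →
      Module.finrank ℂ (LinearMap.ker
        (((κ • (1 : Matrix (Fin (N + 1) × Fin m) (Fin (N + 1) × Fin m) ℂ) - Ginf) ^ n).mulVecLin))
      = Module.finrank ℂ (LinearMap.ker
        (((κ • (1 : Matrix (Fin m) (Fin m) ℂ) - Ainf) ^ n).mulVecLin)) := by
  set c : ℂ := κ - binf with hc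
  have hc0 : c ≠ 0 := sub_ne_zero.mpr hκ
  set S : Matrix (Fin m) (Fin m) ℂ := ∑ j, B j with hS
  set M : Matrix (Fin (N + 1) × Fin m) (Fin (N + 1) × Fin m) ℂ :=
    κ • 1 - Ginf with hM
  set A : Matrix (Fin m) (Fin m) ℂ := κ • 1 - Ainf with hA
  have hMdef : M = c • 1 + binf • Fhat := by
    rw [hM, hGinf, hc, smul_sub]; module
  have hAdef : A = c • 1 + binf • S := by
    rw [hA, hAinf, hc, smul_sub]; module
  -- embedding of constant vectors
  set E : (Fin m → ℂ) →ₗ[ℂ] (Fin (N + 1) × Fin m → ℂ) :=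
    LinearMap.funLeft ℂ ℂ Prod.snd with hE
  have hEapp : ∀ (h : Fin m → ℂ) p, E h p = h p.2 := fun _ _ => rfl
  have hEinj : Function.Injective E :=
    LinearMap.funLeft_injective_of_surjective ℂ ℂ _
      (fun a => ⟨(0, a), rfl⟩)
  -- Fhat on constant vectors
  have hFE : ∀ h : Fin m → ℂ, Fhat.mulVec (E h) = E (S.mulVec h) := by
    intro h
    funext p
    simp only [mulVec, dotProduct, hEapp, hFhat, hS, Matrix.sum_apply,
      Fintype.sum_prod_type]
    rw [Finset.sum_comm]
    simp [Finset.sum_mul]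
  -- Fhat output is constant
  have hFconst : ∀ (y : Fin (N + 1) × Fin m → ℂ) (i j : Fin (N + 1)) (a : Fin m),
      Fhat.mulVec y (i, a) = Fhat.mulVec y (j, a) := by
    intro y i j a
    simp only [mulVec, dotProduct, hFhat]
  -- M on constant vectors
  have hME : ∀ h : Fin m → ℂ, M.mulVec (E h) = E (A.mulVec h) := by
    intro h
    rw [hMdef, hAdef]
    simp only [add_mulVec, smul_mulVec, one_mulVec, hFE, map_add,
      LinearMap.map_smul]
  have hMnE : ∀ (n : ℕ) (h : Fin m → ℂ), (M ^ n).mulVec (E h) = E ((A ^ n).mulVec h) := by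
    intro n
    induction n with
    | zero => intro h; simp
    | succ k ih =>
      intro h
      rw [pow_succ, pow_succ, ← mulVec_mulVec, ← mulVec_mulVec, hME, ih]
  -- M^n = c^n • 1 + Fhat * Q
  have hMpow : ∀ n : ℕ, ∃ Q, M ^ n = (c ^ n) • 1 + Fhat * Q := by
    intro n
    induction n with
    | zero => exact ⟨0, by simp⟩
    | succ k ih =>
      obtain ⟨Q, hQ⟩ := ih
      refine ⟨(c ^ k * binf) • 1 + c • Q + binf • (Q * Fhat), ?_⟩
      rw [pow_succ, hQ, hMdef]
      simp only [Matrix.add_mul, Matrix.mul_add, Matrix.smul_mul, Matrix.mul_smul,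
        Matrix.mul_one, Matrix.one_mul, Matrix.mul_assoc, pow_succ]
      module
  -- kernel vectors are constant
  have hker : ∀ (n : ℕ) (x : Fin (N + 1) × Fin m → ℂ),
      (M ^ n).mulVec x = 0 → 0 < n → x = E (fun a => x (0, a)) := by
    intro n x hx hn
    obtain ⟨Q, hQ⟩ := hMpow n
    have hx' : (c ^ n) • x = -(Fhat.mulVec (Q.mulVec x)) := by
      have := congrArg (fun v => v) hx
      rw [hQ, add_mulVec, smul_mulVec, one_mulVec, ← mulVec_mulVec] at hx
      linear_combination (norm := module) hx
    have hconst : ∀ (i : Fin (N + 1)) (a : Fin m), x (i, a) = x (0, a) := by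
      intro i a
      have hcn : (c ^ n : ℂ) ≠ 0 := pow_ne_zero _ hc0
      have h1 := congrFun hx' (i, a)
      have h2 := congrFun hx' (0, a)
      simp only [Pi.smul_apply, Pi.neg_apply, smul_eq_mul] at h1 h2
      have := hFconst (Q.mulVec x) i 0 a
      have : c ^ n * x (i, a) = c ^ n * x (0, a) := by rw [h1, h2, this]
      exact mul_left_cancel₀ hcn this
    funext p
    exact (hconst p.1 p.2).trans (hEapp (fun a => x (0, a)) p).symm
  intro n hn
  -- build linear equiv between kernels
  have hmem : ∀ h : Fin m → ℂ, h ∈ LinearMap.ker ((A ^ n).mulVecLin) ↔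
      E h ∈ LinearMap.ker ((M ^ n).mulVecLin) := by
    intro h
    simp only [LinearMap.mem_ker, mulVecLin_apply]
    constructor
    · intro hh; rw [hMnE, hh]; exact map_zero E
    · intro hh
      apply hEinj
      rw [← hMnE, hh, map_zero]
  let φ : LinearMap.ker ((A ^ n).mulVecLin) →ₗ[ℂ] LinearMap.ker ((M ^ n).mulVecLin) :=
    LinearMap.restrict E (fun h hh => (hmem h).mp hh)
  have hφinj : Function.Injective φ := by
    intro a b hab
    exact Subtype.ext (hEinj (Subtype.ext_iff.mp hab))
  have hφsurj : Function.Surjective φ := by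
    rintro ⟨x, hx⟩
    have hx' : (M ^ n).mulVec x = 0 := hx
    have hxc := hker n x hx' hn
    have hmem' : (fun a => x (0, a)) ∈ LinearMap.ker ((A ^ n).mulVecLin) := by
      rw [hmem]
      rw [← hxc]
      exact hx
    refine ⟨⟨fun a => x (0, a), hmem'⟩, ?_⟩
    ext p
    exact (congrFun hxc p).symm
  exact (LinearEquiv.ofBijective φ ⟨hφinj, hφsurj⟩).symm.finrank_eq
end

section
/- Suppose q^λ ≠ 1 and let K = ⊕_{i=0}^N ker B_i ⊆ (ℂ^m)^{N+1}, L = {(h,…,h) : h ∈ ker(A_∞ − q^λ b_∞ 1_m)} with A_∞ = b_∞ B_∞. Let G_0 be the block matrix with first block row (1_m − B_0, B_1, …, B_N) and diagonal blocks (1_m − B_0) then q^λ 1_m repeated N times (zeros elsewhere except first row). Then: (a) dim(ker(1·1_{(N+1)m} − G_0) ∩ K) = dim ker(A_0 − 1_m) where A_0 = 1_m − B_0; (b) dim(ker(q^λ·1_{(N+1)m} − G_0) ∩ K) = Σ_{k=1}^N dim ker B_k; (c) for θ ∉ {1, q^λ}, ker(θ·1 − G_0) ∩ K = 0. -/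
/-!
On `K` the first block row `∑ₖ Bₖ vₖ` of `θ - G₀` vanishes, so `θ - G₀` acts on `K` as the
block-diagonal scalar matrix `diag(θ - 1, θ - q^λ, …, θ - q^λ)`. Hence `ker(θ - G₀) ∩ K` is the
direct sum, over the blocks `i` whose diagonal entry is `θ`, of `ker Bᵢ`; since `q^λ ≠ 1`, block
`0` contributes exactly when `θ = 1` and the other blocks exactly when `θ = q^λ`.
-/

open Module LinearMap

section Block

variable {R ι κ : Type*}

def blockSubmodule [CommSemiring R] (S : ι → Submodule R (κ → R)) :
    Submodule R (ι × κ → R) :=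
  ⨅ i, (S i).comap (funLeft R R fun j => (i, j))

@[simp]
theorem mem_blockSubmodule [CommSemiring R] {S : ι → Submodule R (κ → R)} {v : ι × κ → R} :
    v ∈ blockSubmodule S ↔ ∀ i, (fun j => v (i, j)) ∈ S i := by
  simp only [blockSubmodule, Submodule.mem_iInf, Submodule.mem_comap]
  rfl

theorem blockSubmodule_eq_comap_curry [CommSemiring R] (S : ι → Submodule R (κ → R)) :
    blockSubmodule S =
      (Submodule.pi Set.univ S).comap (LinearEquiv.curry R R ι κ).toLinearMap := by
  ext v
  simp only [mem_blockSubmodule, Submodule.mem_comap, Submodule.mem_pi, Set.mem_univ,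
    true_implies, LinearEquiv.coe_coe, LinearEquiv.coe_curry]
  rfl

def Submodule.piUnivEquiv [Semiring R] {φ : ι → Type*} [∀ i, AddCommMonoid (φ i)]
    [∀ i, Module R (φ i)] (p : ∀ i, Submodule R (φ i)) :
    Submodule.pi Set.univ p ≃ₗ[R] ∀ i, p i where
  toFun v i := ⟨v.1 i, v.2 i trivial⟩
  invFun w := ⟨fun i => w i, fun i _ => (w i).2⟩
  map_add' _ _ := rfl
  map_smul' _ _ := rfl
  left_inv _ := rfl
  right_inv _ := rfl

theorem finrank_blockSubmodule [Field R] [Fintype ι] [Finite κ] (S : ι → Submodule R (κ → R)) :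
    finrank R (blockSubmodule S) = ∑ i, finrank R (S i) := by
  rw [blockSubmodule_eq_comap_curry, (LinearEquiv.ofSubmodule' _ _).finrank_eq,
    (Submodule.piUnivEquiv S).finrank_eq, finrank_pi_fintype]

end Block

theorem finrank_ker_smul_id_inf {𝕜 V : Type*} [Field 𝕜] [DecidableEq 𝕜] [AddCommGroup V]
    [Module 𝕜 V] (a : 𝕜) (S : Submodule 𝕜 V) :
    finrank 𝕜 ↥(ker (a • LinearMap.id : V →ₗ[𝕜] V) ⊓ S) = if a = 0 then finrank 𝕜 S else 0 := by
  split_ifs with ha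
  · rw [ha, zero_smul, ker_zero, top_inf_eq]
  · rw [ker_smul _ _ ha, ker_id, bot_inf_eq, finrank_bot]

theorem Matrix.ker_mulVecLin_neg {R m n : Type*} [CommRing R] [Fintype n]
    (A : Matrix m n R) : ker (-A).mulVecLin = ker A.mulVecLin := by
  ext v
  simp

section G0

variable {𝕜 : Type*} [Field 𝕜] {m N : ℕ} {c θ : 𝕜} {Bc : Fin (N + 1) → Matrix (Fin m) (Fin m) 𝕜}
  {G0 : Matrix (Fin (N + 1) × Fin m) (Fin (N + 1) × Fin m) 𝕜}

theorem sub_mulVec_eq_of_mem_blockSubmodule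
    (hG : ∀ (v : Fin (N + 1) × Fin m → 𝕜) (p : Fin (N + 1) × Fin m),
      ((θ • (1 : Matrix (Fin (N + 1) × Fin m) (Fin (N + 1) × Fin m) 𝕜) - G0).mulVec v) p =
        if p.1 = 0 then
          (∑ k, (Bc k).mulVec fun j => v (k, j)) p.2 + (θ - 1) * v p
        else (θ - c) * v p)
    {v : Fin (N + 1) × Fin m → 𝕜} (hv : v ∈ blockSubmodule fun i => ker (Bc i).mulVecLin) :
    (θ • 1 - G0).mulVec v = fun p => (θ - (Fin.cons 1 fun _ => c : Fin (N + 1) → 𝕜) p.1) * v p := by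
  have hsum : (∑ k, (Bc k).mulVec fun j => v (k, j)) = 0 :=
    Finset.sum_eq_zero fun k _ => mem_ker.1 (mem_blockSubmodule.1 hv k)
  ext ⟨i, j⟩
  rw [hG, hsum]
  cases i using Fin.cases <;> simp

theorem ker_sub_inf_blockSubmodule
    (hG : ∀ (v : Fin (N + 1) × Fin m → 𝕜) (p : Fin (N + 1) × Fin m),
      ((θ • (1 : Matrix (Fin (N + 1) × Fin m) (Fin (N + 1) × Fin m) 𝕜) - G0).mulVec v) p =
        if p.1 = 0 then
          (∑ k, (Bc k).mulVec fun j => v (k, j)) p.2 + (θ - 1) * v p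
        else (θ - c) * v p) :
    ker (θ • 1 - G0).mulVecLin ⊓ blockSubmodule (fun i => ker (Bc i).mulVecLin) =
      blockSubmodule fun i =>
        ker ((θ - (Fin.cons 1 fun _ => c : Fin (N + 1) → 𝕜) i) • LinearMap.id) ⊓
          ker (Bc i).mulVecLin := by
  ext v
  rw [Submodule.mem_inf, and_congr_left fun hv => by
    rw [mem_ker, Matrix.mulVecLin_apply, sub_mulVec_eq_of_mem_blockSubmodule hG hv]]
  simp [funext_iff, forall_and, forall_or_left]

end G0

theorem qmc_G0_eigen_K_general (m N : ℕ) (c : ℂ) (hc : c ≠ 1)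
    (Bl : Fin N → Matrix (Fin m) (Fin m) ℂ)
    (B0 : Matrix (Fin m) (Fin m) ℂ)
    (Bc : Fin (N + 1) → Matrix (Fin m) (Fin m) ℂ) (hBc : Bc = Fin.cons B0 Bl)
    (G0 : Matrix (Fin (N + 1) × Fin m) (Fin (N + 1) × Fin m) ℂ)
    (hG0 : ∀ (θ : ℂ) (v : Fin (N + 1) × Fin m → ℂ) (p : Fin (N + 1) × Fin m),
      ((θ • (1 : Matrix (Fin (N + 1) × Fin m) (Fin (N + 1) × Fin m) ℂ) - G0).mulVec v) p =
        if p.1 = 0 then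
          (∑ k, (Bc k).mulVec fun j => v (k, j)) p.2 + (θ - 1) * v p
        else (θ - c) * v p)
    (K : Submodule ℂ (Fin (N + 1) × Fin m → ℂ))
    (hK : K = ⨅ i : Fin (N + 1),
      Submodule.comap (LinearMap.funLeft ℂ ℂ fun j : Fin m => (i, j))
        (LinearMap.ker (Bc i).mulVecLin)) :
    Module.finrank ℂ
        ↥(LinearMap.ker (((1 : ℂ) • (1 : Matrix (Fin (N + 1) × Fin m) (Fin (N + 1) × Fin m) ℂ)
          - G0).mulVecLin) ⊓ K)
      = Module.finrank ℂ
        (LinearMap.ker (((1 : Matrix (Fin m) (Fin m) ℂ) - B0 - 1).mulVecLin)) ∧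
    Module.finrank ℂ
        ↥(LinearMap.ker ((c • (1 : Matrix (Fin (N + 1) × Fin m) (Fin (N + 1) × Fin m) ℂ)
          - G0).mulVecLin) ⊓ K)
      = ∑ k : Fin N, Module.finrank ℂ (LinearMap.ker (Bl k).mulVecLin) ∧
    ∀ θ : ℂ, θ ≠ 1 → θ ≠ c →
      LinearMap.ker ((θ • (1 : Matrix (Fin (N + 1) × Fin m) (Fin (N + 1) × Fin m) ℂ)
        - G0).mulVecLin) ⊓ K = ⊥ := by
  have hK' : K = blockSubmodule fun i => ker (Bc i).mulVecLin := hK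
  have hdim : ∀ θ, finrank ℂ ↥(ker (θ • 1 - G0).mulVecLin ⊓ K) =
      finrank ℂ ↥(ker ((θ - 1) • LinearMap.id) ⊓ ker B0.mulVecLin) +
        ∑ k, finrank ℂ ↥(ker ((θ - c) • LinearMap.id) ⊓ ker (Bl k).mulVecLin) := fun θ => by
    subst hBc
    rw [hK', ker_sub_inf_blockSubmodule (hG0 θ), finrank_blockSubmodule, Fin.sum_univ_succ]
    rfl
  have h1c : (1 : ℂ) - c ≠ 0 := sub_ne_zero.2 hc.symm
  have hc1 : c - 1 ≠ 0 := sub_ne_zero.2 hc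
  refine ⟨?_, ?_, fun θ hθ1 hθc => ?_⟩
  · rw [hdim, sub_self, sub_sub_cancel_left, Matrix.ker_mulVecLin_neg]
    simp [finrank_ker_smul_id_inf, h1c]
  · rw [hdim]
    simp [finrank_ker_smul_id_inf, hc1]
  · rw [← Submodule.finrank_eq_zero, hdim]
    simp [finrank_ker_smul_id_inf, sub_ne_zero.2 hθ1, sub_ne_zero.2 hθc]

/-- Intersections of eigenspaces of `G_0` with `K = ⊕ ker B_i`: with `c = q^λ ≠ 1`,
(a) `dim(ker(1 − G_0) ∩ K) = dim ker(A_0 − 1_m)` (`A_0 = 1 − B_0`);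
(b) `dim(ker(q^λ − G_0) ∩ K) = Σ_{k=1}^N dim ker B_k`;
(c) for `θ ∉ {1, q^λ}`, `ker(θ − G_0) ∩ K = 0`. -/
theorem qmc_G0_eigen_K (m N : ℕ) (c : ℂ) (hc : c ≠ 1)
    (Bl : Fin N → Matrix (Fin m) (Fin m) ℂ) (Binf : Matrix (Fin m) (Fin m) ℂ)
    (B0 : Matrix (Fin m) (Fin m) ℂ) (hB0 : B0 = 1 - ∑ i, Bl i - Binf)
    (Bc : Fin (N + 1) → Matrix (Fin m) (Fin m) ℂ) (hBc : Bc = Fin.cons B0 Bl)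
    (G0 : Matrix (Fin (N + 1) × Fin m) (Fin (N + 1) × Fin m) ℂ)
    (hG0 : ∀ (θ : ℂ) (v : Fin (N + 1) × Fin m → ℂ) (p : Fin (N + 1) × Fin m),
      ((θ • (1 : Matrix (Fin (N + 1) × Fin m) (Fin (N + 1) × Fin m) ℂ) - G0).mulVec v) p =
        if p.1 = 0 then
          (∑ k, (Bc k).mulVec fun j => v (k, j)) p.2 + (θ - 1) * v p
        else (θ - c) * v p)
    (K : Submodule ℂ (Fin (N + 1) × Fin m → ℂ))
    (hK : K = ⨅ i : Fin (N + 1),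
      Submodule.comap (LinearMap.funLeft ℂ ℂ fun j : Fin m => (i, j))
        (LinearMap.ker (Bc i).mulVecLin)) :
    Module.finrank ℂ
        ↥(LinearMap.ker (((1 : ℂ) • (1 : Matrix (Fin (N + 1) × Fin m) (Fin (N + 1) × Fin m) ℂ)
          - G0).mulVecLin) ⊓ K)
      = Module.finrank ℂ
        (LinearMap.ker (((1 : Matrix (Fin m) (Fin m) ℂ) - B0 - 1).mulVecLin)) ∧
    Module.finrank ℂ
        ↥(LinearMap.ker ((c • (1 : Matrix (Fin (N + 1) × Fin m) (Fin (N + 1) × Fin m) ℂ)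
          - G0).mulVecLin) ⊓ K)
      = ∑ k : Fin N, Module.finrank ℂ (LinearMap.ker (Bl k).mulVecLin) ∧
    ∀ θ : ℂ, θ ≠ 1 → θ ≠ c →
      LinearMap.ker ((θ • (1 : Matrix (Fin (N + 1) × Fin m) (Fin (N + 1) × Fin m) ℂ)
        - G0).mulVecLin) ⊓ K = ⊥ :=
  qmc_G0_eigen_K_general m N c hc Bl B0 Bc hBc G0 hG0 K hK
end
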